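/- Let $q \geq 2$ and let $\theta: \mathbb{R}^n \to \mathbb{R}$ be a bounded smooth function for which $\Lambda\theta(x) = c_n \mathrm{p.v.}\int \frac{\theta(x)-\theta(y)}{|x-y|^{n+1}}dy$ is well defined pointwise. Then the pointwise inequality $q |\theta(x)|^{q-2}\theta(x) \Lambda\theta(x) \geq 2 |\theta(x)|^{q/2} \Lambda(|\theta|^{q/2})(x)$ holds for all $x$ where both sides are defined. -/

import Mathlib

open MeasureTheory Metric Filter Set

/-- Weighted AM-GM step: `q a^{q-1} b ≤ (q-2) a^q + 2 a^{q/2} b^{q/2}`. -/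
lemma cc_amgm {q a b : ℝ} (hq : 2 ≤ q) (ha : 0 ≤ a) (hb : 0 ≤ b) :
    q * (a ^ (q - 1) * b) ≤ (q - 2) * a ^ q + 2 * (a ^ (q / 2) * b ^ (q / 2)) := by
  have hq0 : (0:ℝ) < q := by linarith
  have hp2 : 0 ≤ a ^ (q / 2) * b ^ (q / 2) :=
    mul_nonneg (Real.rpow_nonneg ha _) (Real.rpow_nonneg hb _)
  have h := Real.geom_mean_le_arith_mean2_weighted
    (w₁ := (q - 2) / q) (w₂ := 2 / q) (p₁ := a ^ q) (p₂ := a ^ (q / 2) * b ^ (q / 2))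
    (div_nonneg (by linarith) hq0.le) (by positivity) (Real.rpow_nonneg ha _) hp2 (by field_simp; ring)
  have e1 : (a ^ q) ^ ((q - 2) / q) = a ^ (q - 2) := by
    rw [← Real.rpow_mul ha, mul_div_cancel₀ _ hq0.ne']
  have e2 : (a ^ (q / 2) * b ^ (q / 2)) ^ (2 / q) = a * b := by
    rw [Real.mul_rpow (Real.rpow_nonneg ha _) (Real.rpow_nonneg hb _),
      ← Real.rpow_mul ha, ← Real.rpow_mul hb]
    rw [show q / 2 * (2 / q) = 1 by field_simp, Real.rpow_one, Real.rpow_one]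
  have e3 : a ^ (q - 2) * (a * b) = a ^ (q - 1) * b := by
    rw [show q - 1 = (q - 2) + 1 by ring, Real.rpow_add' ha (by intro h; linarith [hq] ),
      Real.rpow_one]
    ring
  rw [e1, e2, e3] at h
  have h2 := mul_le_mul_of_nonneg_left h hq0.le
  have e4 : q * ((q - 2) / q * a ^ q + 2 / q * (a ^ (q / 2) * b ^ (q / 2)))
      = (q - 2) * a ^ q + 2 * (a ^ (q / 2) * b ^ (q / 2)) := by
    field_simp
  rw [e4] at h2
  linarith

/-- Pointwise convexity inequality (Córdoba–Córdoba). -/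
lemma cc_key {q : ℝ} (hq : 2 ≤ q) (s t : ℝ) :
    2 * |s| ^ (q / 2) * (|s| ^ (q / 2) - |t| ^ (q / 2)) ≤ q * |s| ^ (q - 2) * s * (s - t) := by
  have hq0 : (0:ℝ) < q := by linarith
  set a := |s| with ha
  set b := |t| with hb
  have ha0 : 0 ≤ a := abs_nonneg s
  have hb0 : 0 ≤ b := abs_nonneg t
  -- identities
  have h1 : a ^ (q - 2) * s * s = a ^ q := by
    rcases eq_or_ne s 0 with hs | hs
    · simp [hs, ha, Real.zero_rpow hq0.ne']
    · have hap : 0 < a := abs_pos.mpr hs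
      have : s * s = a * a := (abs_mul_abs_self s).symm ▸ rfl
      calc a ^ (q - 2) * s * s = a ^ (q - 2) * (a * a) := by rw [mul_assoc, this]
        _ = a ^ (q - 2) * a ^ (1:ℝ) * a ^ (1:ℝ) := by rw [Real.rpow_one]; ring
        _ = a ^ q := by
            rw [← Real.rpow_add hap, ← Real.rpow_add hap]
            congr 1
            ring
  have h2 : a ^ (q / 2) * a ^ (q / 2) = a ^ q := by
    rw [← Real.rpow_add' ha0 (by intro h; simp at h; linarith)]
    norm_num
  have h3 : a ^ (q - 2) * s * t ≤ a ^ (q - 1) * b := by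
    have e : a ^ (q - 2) * a = a ^ (q - 1) := by
      rw [show q - 1 = (q - 2) + 1 by ring, Real.rpow_add' ha0 (by intro h; linarith),
        Real.rpow_one]
    calc a ^ (q - 2) * s * t ≤ |a ^ (q - 2) * s * t| := le_abs_self _
      _ = a ^ (q - 2) * a * b := by
          rw [abs_mul, abs_mul, abs_of_nonneg (Real.rpow_nonneg ha0 _)]
      _ = a ^ (q - 1) * b := by rw [e]
  have hmul := mul_le_mul_of_nonneg_left h3 hq0.le
  have hamgm := cc_amgm hq ha0 hb0
  have eL : 2 * a ^ (q / 2) * (a ^ (q / 2) - b ^ (q / 2))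
      = 2 * (a ^ (q / 2) * a ^ (q / 2)) - 2 * (a ^ (q / 2) * b ^ (q / 2)) := by ring
  have eR : q * a ^ (q - 2) * s * (s - t)
      = q * (a ^ (q - 2) * s * s) - q * (a ^ (q - 2) * s * t) := by ring
  rw [eL, eR, h1, h2]
  linarith

/-- Integrability of a bounded continuous function against the kernel away from the singularity. -/
lemma cc_integrableOn {n : ℕ} (x : EuclideanSpace ℝ (Fin n)) {ε : ℝ} (hε : 0 < ε)
    {g : EuclideanSpace ℝ (Fin n) → ℝ} (hg : Continuous g) {C : ℝ} (hC : ∀ y, |g y| ≤ C) :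
    IntegrableOn (fun y => g y / dist x y ^ ((n : ℝ) + 1))
      {y : EuclideanSpace ℝ (Fin n) | ε ≤ dist x y} volume := by
  set r : ℝ := (n : ℝ) + 1 with hr
  have hr0 : (0:ℝ) ≤ r := by positivity
  have hC0 : 0 ≤ C := le_trans (abs_nonneg _) (hC x)
  have hrank : (Module.finrank ℝ (EuclideanSpace ℝ (Fin n)) : ℝ) < r := by
    rw [finrank_euclideanSpace_fin]
    simp [hr]
  have hbase : Integrable (fun y : EuclideanSpace ℝ (Fin n) => (1 + ‖y - x‖) ^ (-r)) volume :=
    (integrable_one_add_norm hrank).comp_sub_right x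
  set K : ℝ := ((1 + ε) / ε) ^ r with hK
  have hK0 : 0 ≤ K := Real.rpow_nonneg (by positivity) _
  have hSmeas : MeasurableSet {y : EuclideanSpace ℝ (Fin n) | ε ≤ dist x y} :=
    (isClosed_le continuous_const (continuous_const.dist continuous_id)).measurableSet
  have hint : Integrable
      (fun y : EuclideanSpace ℝ (Fin n) => (C * K) * (1 + ‖y - x‖) ^ (-r)) volume :=
    hbase.const_mul _
  refine Integrable.mono' hint.integrableOn ?_ ?_
  · have hm : Measurable (fun y => g y / dist x y ^ r) :=
      hg.measurable.div
        (((continuous_const.dist continuous_id).rpow_const (fun y => Or.inr hr0)).measurable)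
    exact hm.aestronglyMeasurable.restrict
  · rw [ae_restrict_iff' hSmeas]
    filter_upwards with y hy
    have hy' : ε ≤ dist x y := hy
    have hd : 0 < dist x y := lt_of_lt_of_le hε hy'
    set d : ℝ := dist x y with hdd
    have hnd : ‖y - x‖ = d := by rw [hdd, dist_comm]; exact (dist_eq_norm y x).symm
    have hdr : 0 < d ^ r := Real.rpow_pos_of_pos hd r
    have hkey : (1 + d) ^ r ≤ K * d ^ r := by
      have h1 : 1 + d ≤ ((1 + ε) / ε) * d := by
        have h1a : 1 ≤ d / ε := (one_le_div hε).mpr hy'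
        have h1b : ((1 + ε) / ε) * d = d / ε + d := by field_simp
        rw [h1b]
        linarith
      calc (1 + d) ^ r ≤ (((1 + ε) / ε) * d) ^ r :=
            Real.rpow_le_rpow (by positivity) h1 hr0
        _ = K * d ^ r := Real.mul_rpow (by positivity) hd.le
    have hb : ‖g y / d ^ r‖ = |g y| / d ^ r := by
      rw [Real.norm_eq_abs, abs_div, abs_of_pos hdr]
    rw [hb, hnd]
    have h2 : |g y| / d ^ r ≤ C / d ^ r := by gcongr; exact hC y
    have hp : 0 < (1 + d) ^ r := Real.rpow_pos_of_pos (by positivity) r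
    have h3 : C / d ^ r ≤ C * K / (1 + d) ^ r := by
      rw [div_le_div_iff₀ hdr hp]
      have h4 := mul_le_mul_of_nonneg_left hkey hC0
      nlinarith [h4]
    have h5 : C * K / (1 + d) ^ r = C * K * (1 + d) ^ (-r) := by
      rw [Real.rpow_neg (by positivity), div_eq_mul_inv]
    calc |g y| / d ^ r ≤ C / d ^ r := h2
      _ ≤ C * K / (1 + d) ^ r := h3
      _ = C * K * (1 + d) ^ (-r) := h5

/-- Córdoba–Córdoba / Ju pointwise inequality: let `q ≥ 2` and let
`θ : ℝⁿ → ℝ` be bounded and smooth. Suppose at the point `x` both principal values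
`Λθ(x) = A` and `Λ(|θ|^{q/2})(x) = B` exist (kernel constant set to 1, the inequality being
invariant under this normalization). Then
`q |θ(x)|^{q-2} θ(x) Λθ(x) ≥ 2 |θ(x)|^{q/2} Λ(|θ|^{q/2})(x)`. -/
theorem stmt13 (n : ℕ) (hn : 1 ≤ n) (q : ℝ) (hq : 2 ≤ q)
    (θ : EuclideanSpace ℝ (Fin n) → ℝ) (hθ : ContDiff ℝ (⊤ : ℕ∞) θ)
    (hθbdd : ∃ M : ℝ, ∀ x, |θ x| ≤ M)
    (x : EuclideanSpace ℝ (Fin n)) (A B : ℝ)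
    (hA : Tendsto
      (fun ε : ℝ => ∫ y in {y : EuclideanSpace ℝ (Fin n) | ε ≤ dist x y},
        (θ x - θ y) / dist x y ^ ((n : ℝ) + 1))
      (nhdsWithin 0 (Set.Ioi 0)) (nhds A))
    (hB : Tendsto
      (fun ε : ℝ => ∫ y in {y : EuclideanSpace ℝ (Fin n) | ε ≤ dist x y},
        (|θ x| ^ (q / 2) - |θ y| ^ (q / 2)) / dist x y ^ ((n : ℝ) + 1))
      (nhdsWithin 0 (Set.Ioi 0)) (nhds B)) :
    2 * |θ x| ^ (q / 2) * B ≤ q * |θ x| ^ (q - 2) * θ x * A := by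
  obtain ⟨M, hM⟩ := hθbdd
  have hM0 : 0 ≤ M := le_trans (abs_nonneg _) (hM x)
  set cA : ℝ := q * |θ x| ^ (q - 2) * θ x with hcA
  set cB : ℝ := 2 * |θ x| ^ (q / 2) with hcB
  have hFM : ∀ z, |θ z| ^ (q / 2) ≤ M ^ (q / 2) := fun z =>
    Real.rpow_le_rpow (abs_nonneg _) (hM z) (by positivity)
  have main : ∀ ε ∈ Set.Ioi (0:ℝ),
      cB * (∫ y in {y : EuclideanSpace ℝ (Fin n) | ε ≤ dist x y},
        (|θ x| ^ (q / 2) - |θ y| ^ (q / 2)) / dist x y ^ ((n : ℝ) + 1)) ≤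
      cA * (∫ y in {y : EuclideanSpace ℝ (Fin n) | ε ≤ dist x y},
        (θ x - θ y) / dist x y ^ ((n : ℝ) + 1)) := by
    intro ε hε
    rw [Set.mem_Ioi] at hε
    rw [← integral_const_mul, ← integral_const_mul]
    have hSmeas : MeasurableSet {y : EuclideanSpace ℝ (Fin n) | ε ≤ dist x y} :=
      (isClosed_le continuous_const (continuous_const.dist continuous_id)).measurableSet
    simp only [← mul_div_assoc]
    refine setIntegral_mono_on ?_ ?_ hSmeas ?_
    · refine cc_integrableOn x hε
        (continuous_const.mul (continuous_const.sub
          ((hθ.continuous.abs).rpow_const (fun y => Or.inr (by positivity)))))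
        (C := |cB| * (M ^ (q / 2) + M ^ (q / 2))) (fun y => ?_)
      rw [abs_mul]
      refine mul_le_mul_of_nonneg_left ?_ (abs_nonneg _)
      calc |(|θ x| ^ (q / 2) - |θ y| ^ (q / 2))|
          ≤ |(|θ x| ^ (q / 2))| + |(|θ y| ^ (q / 2))| := abs_sub _ _
        _ ≤ M ^ (q / 2) + M ^ (q / 2) := by
            rw [abs_of_nonneg (Real.rpow_nonneg (abs_nonneg _) _),
              abs_of_nonneg (Real.rpow_nonneg (abs_nonneg _) _)]
            exact add_le_add (hFM x) (hFM y)
    · refine cc_integrableOn x hε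
        (continuous_const.mul (continuous_const.sub hθ.continuous))
        (C := |cA| * (M + M)) (fun y => ?_)
      rw [abs_mul]
      refine mul_le_mul_of_nonneg_left ?_ (abs_nonneg _)
      calc |θ x - θ y| ≤ |θ x| + |θ y| := abs_sub _ _
        _ ≤ M + M := add_le_add (hM x) (hM y)
    · intro y hy
      have hd : (0:ℝ) < dist x y := lt_of_lt_of_le hε hy
      have hdr : (0:ℝ) < dist x y ^ ((n : ℝ) + 1) := Real.rpow_pos_of_pos hd _
      exact div_le_div_of_nonneg_right (cc_key hq (θ x) (θ y)) hdr.le |>.trans_eq rfl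
  exact le_of_tendsto_of_tendsto (hB.const_mul cB) (hA.const_mul cA)
    (Filter.eventually_of_mem self_mem_nhdsWithin main)
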